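/- Let g(s) = 2^{1−s}·π^{−s}·cos(πs/2)·Γ(s) be the factor in the functional equation ζ(1−s) = g(s)ζ(s). Then for every real t, |g(1/2 + it)| = 1. -/

import Mathlib

noncomputable def g (s : ℂ) : ℂ :=
  (2 : ℂ) ^ (1 - s) * (Real.pi : ℂ) ^ (-s) * Complex.cos (Real.pi * s / 2)
    * Complex.Gamma s

lemma abs_g_aux (s : ℂ) (hconj : (starRingEnd ℂ) s = 1 - s)
    (hsin : Complex.sin (Real.pi * s) ≠ 0) : ‖g s‖ = 1 := by
  have harg2 : ((2:ℂ)).arg ≠ Real.pi := by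
    rw [Complex.ofNat_arg]; exact Real.pi_ne_zero.symm
  have hargpi : ((Real.pi : ℂ)).arg ≠ Real.pi := by
    rw [Complex.arg_ofReal_of_nonneg Real.pi_pos.le]; exact Real.pi_ne_zero.symm
  have hconjg : (starRingEnd ℂ) (g s) = g (1 - s) := by
    unfold g
    simp only [map_mul]
    have c1 : (starRingEnd ℂ) ((2:ℂ) ^ (1 - s)) = (2:ℂ) ^ (1 - (1 - s)) := by
      rw [← hconj, Complex.cpow_conj _ _ harg2, Complex.conj_conj,
        map_ofNat (starRingEnd ℂ) 2, hconj]
      ring_nf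
    have c2 : (starRingEnd ℂ) ((Real.pi:ℂ) ^ (-s)) = (Real.pi:ℂ) ^ (-(1 - s)) := by
      rw [show -s = (starRingEnd ℂ) (-(1-s)) from by rw [map_neg, map_sub, map_one, hconj]; ring,
        Complex.cpow_conj _ _ hargpi, Complex.conj_conj, Complex.conj_ofReal]
    have c3 : (starRingEnd ℂ) (Complex.cos (Real.pi * s / 2))
        = Complex.cos (Real.pi * (1 - s) / 2) := by
      rw [← Complex.cos_conj]
      congr 1
      rw [map_div₀, map_mul, hconj, Complex.conj_ofReal,
        map_ofNat (starRingEnd ℂ) 2]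
    have c4 : (starRingEnd ℂ) (Complex.Gamma s) = Complex.Gamma (1 - s) := by
      rw [← Complex.Gamma_conj, hconj]
    rw [c1, c2, c3, c4]
  have key : g s * g (1 - s) = 1 := by
    unfold g
    have e2 : (2:ℂ) ^ (1 - s) * (2:ℂ) ^ (1 - (1 - s)) = 2 := by
      rw [← Complex.cpow_add _ _ (by norm_num)]
      ring_nf
      exact Complex.cpow_one 2
    have epi : (Real.pi : ℂ) ^ (-s) * (Real.pi : ℂ) ^ (-(1 - s)) = (Real.pi : ℂ)⁻¹ := by
      rw [← Complex.cpow_add _ _ (by exact_mod_cast Real.pi_ne_zero)]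
      ring_nf
      rw [Complex.cpow_neg_one]
    have ecos : Complex.cos (Real.pi * s / 2) * Complex.cos (Real.pi * (1 - s) / 2)
        = Complex.sin (Real.pi * s) / 2 := by
      have h : (Real.pi : ℂ) * (1 - s) / 2 = Real.pi / 2 - Real.pi * s / 2 := by ring
      rw [h, Complex.cos_pi_div_two_sub,
        show (Real.pi : ℂ) * s = 2 * (Real.pi * s / 2) by ring, Complex.sin_two_mul]
      ring
    have eG := Complex.Gamma_mul_Gamma_one_sub s
    have hpi : (Real.pi : ℂ) ≠ 0 := by exact_mod_cast Real.pi_ne_zero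
    calc (2:ℂ) ^ (1 - s) * (Real.pi:ℂ) ^ (-s) * Complex.cos (Real.pi * s / 2) * Complex.Gamma s *
          ((2:ℂ) ^ (1 - (1-s)) * (Real.pi:ℂ) ^ (-(1-s)) * Complex.cos (Real.pi * (1-s) / 2) * Complex.Gamma (1-s))
        = ((2:ℂ) ^ (1 - s) * (2:ℂ) ^ (1 - (1 - s))) * ((Real.pi:ℂ) ^ (-s) * (Real.pi:ℂ) ^ (-(1 - s)))
          * (Complex.cos (Real.pi * s / 2) * Complex.cos (Real.pi * (1-s) / 2))
          * (Complex.Gamma s * Complex.Gamma (1-s)) := by ring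
      _ = 2 * (Real.pi : ℂ)⁻¹ * (Complex.sin (Real.pi * s) / 2) * (Real.pi / Complex.sin (Real.pi * s)) := by
          rw [e2, epi, ecos, eG]
      _ = 1 := by field_simp
  have hnormSq : Complex.normSq (g s) = 1 := by
    have h := Complex.mul_conj (g s)
    rw [hconjg, key] at h
    exact_mod_cast h.symm
  rw [show ‖g s‖ = Real.sqrt (Complex.normSq (g s)) from rfl, hnormSq, Real.sqrt_one]

theorem abs_g_critical_line (t : ℝ) :
    ‖g (1/2 + Complex.I * t)‖ = 1 := by
  apply abs_g_aux
  · simp [Complex.ext_iff]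
    norm_num
  · rw [Complex.sin_ne_zero_iff]
    intro k h
    have hre : ((Real.pi : ℂ) * (1/2 + Complex.I * t)).re = Real.pi / 2 := by
      simp; ring
    rw [h] at hre
    simp at hre
    have h1 : (2 * k : ℝ) = 1 := by
      have := Real.pi_ne_zero
      field_simp at hre
      nlinarith [Real.pi_pos]
    have h2 : (2 * k : ℤ) = 1 := by exact_mod_cast h1
    omega
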